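/- Let Y_1, Y_2, … be a sequence of independent nonnegative random variables, each Y_i taking values in [0,1], and define interarrival times X_n = ∏_{i=1}^n Y_i, n = 1, 2, …, with associated counting process N(t) = sup{n ≥ 0 : X_1 + ⋯ + X_n ≤ t}. If T is a DFR nonnegative random variable independent of the process and P(T = 0)·P(Y_1 = 0) = 0 (T and Y_1 do not both have positive mass at 0), then N(T) is d-DFR. -/

import Mathlib

open MeasureTheory ProbabilityTheory

variable {Ω : Type*} [MeasurableSpace Ω]

/-- Survival function of a random variable `T`: `F̄_T(t) = P(T > t)`. -/
noncomputable def surv (μ : Measure Ω) (T : Ω → ℝ) (t : ℝ) : ℝ :=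
  (μ {ω | t < T ω}).toReal

/-- `T` has the decreasing failure rate (DFR) property:
`F̄_T(s+z)·F̄_T(t) ≤ F̄_T(t+z)·F̄_T(s)` for all `0 ≤ s ≤ t` and `z ≥ 0`
(log-convexity of the survival function on `[0,∞)`). -/
def IsDFR (μ : Measure Ω) (T : Ω → ℝ) : Prop :=
  ∀ s t z : ℝ, 0 ≤ s → s ≤ t → 0 ≤ z →
    μ {ω | s + z < T ω} * μ {ω | t < T ω} ≤ μ {ω | t + z < T ω} * μ {ω | s < T ω}

/-- Arrival times: `S n = X 1 + ⋯ + X n` (with 0-based indexing of the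
interarrival times, `X i` is the `(i+1)`-st interarrival time), `S 0 = 0`. -/
noncomputable def arr (X : ℕ → Ω → ℝ) (n : ℕ) (ω : Ω) : ℝ :=
  ∑ i ∈ Finset.range n, X i ω

/-- The counting process `N(t) = sup {n ≥ 0 : S n ≤ t}` (valued in `ℕ∞`,
allowing infinitely many arrivals). -/
noncomputable def countN (X : ℕ → Ω → ℝ) (t : ℝ) (ω : Ω) : ℕ∞ :=
  sSup ((fun n : ℕ => (n : ℕ∞)) '' {n : ℕ | arr X n ω ≤ t})

/-- A (possibly defective) `ℕ∞`-valued random variable `M` is discrete DFR: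
`P(M ≥ n+1)² ≤ P(M ≥ n)·P(M ≥ n+2)` for all `n`. -/
def IsdDFR (μ : Measure Ω) (M : Ω → ℕ∞) : Prop :=
  ∀ n : ℕ,
    μ {ω | (n : ℕ∞) + 1 ≤ M ω} ^ 2 ≤
      μ {ω | (n : ℕ∞) ≤ M ω} * μ {ω | (n : ℕ∞) + 2 ≤ M ω}

/-!
Write `S n` for the arrival times and `G r = P(T ≥ r)`. Since `T` is independent of the
interarrival times, `P(N(T) ≥ n) = P(T ≥ S n) = E[G(S n)]`. The DFR property makes `G`
log-convex on `[0, ∞)`, and the interarrival times `X n = Y 0 ⋯ Y n` are nonincreasing, so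
`S (n+2) - S (n+1) ≤ S (n+1) - S n`; together with the monotonicity of `G` this gives
`G(S (n+1))² ≤ G(S n) · G(S (n+2))` pointwise, and Cauchy–Schwarz integrates this to the
d-DFR inequality.
-/

open MeasureTheory ProbabilityTheory Filter Topology Set
open scoped ENNReal

section ArrivalTimes

variable {α : Type*} {X : ℕ → α → ℝ} {ω : α}

lemma arr_succ (n : ℕ) : arr X (n + 1) ω = arr X n ω + X n ω :=
  Finset.sum_range_succ _ n

lemma arr_nonneg (hX : ∀ n, 0 ≤ X n ω) (n : ℕ) : 0 ≤ arr X n ω :=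
  Finset.sum_nonneg fun i _ => hX i

lemma monotone_arr (hX : ∀ n, 0 ≤ X n ω) : Monotone (arr X · ω) :=
  monotone_nat_of_le_succ fun n => by simp [arr_succ, hX n]

lemma measurable_arr [MeasurableSpace α] (hX : ∀ n, Measurable (X n)) (n : ℕ) :
    Measurable (arr X n) :=
  Finset.measurable_sum _ fun i _ => hX i

lemma natCast_le_countN_iff (hX : ∀ n, 0 ≤ X n ω) {t : ℝ} (ht : 0 ≤ t) (n : ℕ) :
    (n : ℕ∞) ≤ countN X t ω ↔ arr X n ω ≤ t := by
  cases n with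
  | zero => simp [arr, ht]
  | succ k =>
    rw [Nat.cast_succ, ENat.add_one_le_iff (ENat.natCast_ne_top k), countN, lt_sSup_iff]
    constructor
    · rintro ⟨_, ⟨m, hm, rfl⟩, hkm⟩
      exact (monotone_arr hX (Nat.cast_lt.mp hkm)).trans hm
    · exact fun h => ⟨_, ⟨k + 1, h, rfl⟩, Nat.cast_lt.mpr k.lt_succ_self⟩

lemma sq_comp_arr_succ_le_mul {g : ℝ → ℝ≥0∞} (hg : Antitone g)
    (hlc : ∀ a d, 0 ≤ a → 0 ≤ d → g (a + d) ^ 2 ≤ g a * g (a + 2 * d))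
    (hX : ∀ n, 0 ≤ X n ω) (hXanti : Antitone (X · ω)) (n : ℕ) :
    g (arr X (n + 1) ω) ^ 2 ≤ g (arr X n ω) * g (arr X (n + 2) ω) := by
  rw [arr_succ (n := n + 1), arr_succ]
  calc g (arr X n ω + X n ω) ^ 2 ≤ g (arr X n ω) * g (arr X n ω + 2 * X n ω) :=
        hlc _ _ (arr_nonneg hX n) (hX n)
    _ ≤ g (arr X n ω) * g (arr X n ω + X n ω + X (n + 1) ω) :=
        mul_le_mul_right (hg (by linarith [hXanti n.le_succ])) _

end ArrivalTimes

lemma antitone_prod_range {y : ℕ → ℝ} (hy : ∀ i, y i ∈ Icc (0 : ℝ) 1) :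
    Antitone fun n => ∏ i ∈ Finset.range (n + 1), y i :=
  antitone_nat_of_succ_le fun n => by
    rw [Finset.prod_range_succ _ (n + 1)]
    exact mul_le_of_le_one_right (Finset.prod_nonneg fun i _ => (hy i).1) (hy _).2

lemma lintegral_sq_le_mul_of_ae_sq_le {α : Type*} [MeasurableSpace α] {μ : Measure α}
    {f g h : α → ℝ≥0∞} (hg : AEMeasurable g μ) (hh : AEMeasurable h μ)
    (hfgh : ∀ᵐ a ∂μ, f a ^ 2 ≤ g a * h a) :
    (∫⁻ a, f a ∂μ) ^ 2 ≤ (∫⁻ a, g a ∂μ) * ∫⁻ a, h a ∂μ := by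
  have hsqrt : ∀ᵐ a ∂μ, f a ≤ g a ^ (2⁻¹ : ℝ) * h a ^ (2⁻¹ : ℝ) := by
    filter_upwards [hfgh] with a ha
    rwa [← ENNReal.mul_rpow_of_nonneg _ _ (by norm_num), ENNReal.le_rpow_inv_iff two_pos,
      ENNReal.rpow_two]
  calc (∫⁻ a, f a ∂μ) ^ 2
      ≤ ((∫⁻ a, g a ∂μ) ^ (2⁻¹ : ℝ) * (∫⁻ a, h a ∂μ) ^ (2⁻¹ : ℝ)) ^ 2 := by
        gcongr
        exact (lintegral_mono_ae hsqrt).trans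
          (ENNReal.lintegral_mul_norm_pow_le hg hh (by norm_num) (by norm_num) (by norm_num))
    _ = (∫⁻ a, g a ∂μ) * ∫⁻ a, h a ∂μ := by
        rw [mul_pow, ← ENNReal.rpow_two, ← ENNReal.rpow_two, ← ENNReal.rpow_mul,
          ← ENNReal.rpow_mul]
        norm_num

lemma antitone_measure_le (μ : Measure Ω) (T : Ω → ℝ) :
    Antitone fun r => μ {ω | r ≤ T ω} :=
  fun _ _ h => measure_mono fun _ hω => h.trans hω

section Tails

variable {μ : Measure Ω} {T : Ω → ℝ}

lemma tendsto_measure_sub_lt_nhdsGT [IsFiniteMeasure μ] (hT : Measurable T) (c : ℝ) :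
    Tendsto (fun r => μ {ω | c - r < T ω}) (𝓝[>] 0) (𝓝 (μ {ω | c ≤ T ω})) := by
  have hinter : {ω | c ≤ T ω} = ⋂ r > 0, {ω | c - r < T ω} := by
    ext ω
    simp only [mem_ofPred_eq, mem_iInter]
    refine ⟨fun h r hr => by linarith, fun h => ?_⟩
    by_contra! hlt
    linarith [h (c - T ω) (by linarith)]
  rw [hinter]
  exact tendsto_measure_biInter_gt
    (fun _ _ => (measurableSet_lt measurable_const hT).nullMeasurableSet)
    (fun _ _ _ hij _ hω => by simp only [mem_ofPred_eq] at hω ⊢; linarith)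
    ⟨1, one_pos, measure_ne_top μ _⟩

/-- `IsDFR` is stated for the open tails `P(T > r)`; the closed tails `P(T ≥ r)` are their
left limits. -/
lemma IsDFR.measure_le_sq_le [IsFiniteMeasure μ] (hDFR : IsDFR μ T) (hT : Measurable T)
    {s z : ℝ} (hs : 0 ≤ s) (hz : 0 ≤ z) :
    μ {ω | s + z ≤ T ω} ^ 2 ≤ μ {ω | s ≤ T ω} * μ {ω | s + 2 * z ≤ T ω} := by
  rcases hz.eq_or_lt with rfl | hz
  · simp [sq]
  have hmul2 : Tendsto (fun r : ℝ => 2 * r) (𝓝[>] 0) (𝓝[>] 0) :=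
    tendsto_iff_comap.2 (comap_mulLeft_nhdsGT_zero two_pos).ge
  have hleft := ENNReal.Tendsto.pow (n := 2) (tendsto_measure_sub_lt_nhdsGT (μ := μ) hT (s + z))
  have hright := ENNReal.Tendsto.mul_const (b := μ {ω | s < T ω})
    ((tendsto_measure_sub_lt_nhdsGT (μ := μ) hT (s + 2 * z)).comp hmul2)
    (Or.inr (measure_ne_top μ _))
  have hsmall : ∀ᶠ r in 𝓝[>] (0 : ℝ), μ {ω | s + z - r < T ω} ^ 2
      ≤ μ {ω | s + 2 * z - 2 * r < T ω} * μ {ω | s < T ω} := by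
    filter_upwards [Ioo_mem_nhdsGT hz] with r hr
    have h := hDFR s (s + z - r) (z - r) hs (by linarith [hr.2]) (by linarith [hr.2])
    rw [show s + (z - r) = s + z - r by ring,
      show s + z - r + (z - r) = s + 2 * z - 2 * r by ring] at h
    rwa [sq]
  calc μ {ω | s + z ≤ T ω} ^ 2 ≤ μ {ω | s + 2 * z ≤ T ω} * μ {ω | s < T ω} :=
        le_of_tendsto_of_tendsto hleft hright hsmall
    _ ≤ μ {ω | s + 2 * z ≤ T ω} * μ {ω | s ≤ T ω} :=
        mul_le_mul_right (measure_mono fun _ (h : s < T _) => h.le) _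
    _ = μ {ω | s ≤ T ω} * μ {ω | s + 2 * z ≤ T ω} := mul_comm _ _

lemma ProbabilityTheory.IndepFun.measure_le_eq_lintegral [IsFiniteMeasure μ] {S : Ω → ℝ}
    (hST : IndepFun S T μ) (hS : Measurable S) (hT : Measurable T) :
    μ {ω | S ω ≤ T ω} = ∫⁻ ω, μ {ω' | S ω ≤ T ω'} ∂μ := by
  have hC : MeasurableSet {p : ℝ × ℝ | p.1 ≤ p.2} :=
    measurableSet_le measurable_fst measurable_snd
  calc μ {ω | S ω ≤ T ω} = μ.map (fun ω => (S ω, T ω)) {p | p.1 ≤ p.2} :=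
        (Measure.map_apply (hS.prodMk hT) hC).symm
    _ = ((μ.map S).prod (μ.map T)) {p | p.1 ≤ p.2} := by
        rw [(indepFun_iff_map_prod_eq_prod_map_map hS.aemeasurable hT.aemeasurable).1 hST]
    _ = ∫⁻ s, μ.map T (Ici s) ∂μ.map S := Measure.prod_apply hC
    _ = ∫⁻ ω, μ {ω' | S ω ≤ T ω'} ∂μ := by
        simp_rw [Measure.map_apply hT measurableSet_Ici]
        exact lintegral_map (antitone_measure_le μ T).measurable hS

end Tails

theorem stmt8_general
    (μ : Measure Ω) [IsProbabilityMeasure μ]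
    (Y : ℕ → Ω → ℝ) (T : Ω → ℝ)
    (hYmeas : ∀ n, Measurable (Y n))
    (hYmem : ∀ n ω, Y n ω ∈ Set.Icc (0 : ℝ) 1)
    (hTmeas : Measurable T) (hTnonneg : ∀ ω, 0 ≤ T ω)
    (hindep : IndepFun T (fun ω n => Y n ω) μ)
    (hDFR : IsDFR μ T) :
    IsdDFR μ (fun ω =>
      countN (fun n ω' => ∏ i ∈ Finset.range (n + 1), Y i ω') (T ω) ω) := by
  set X : ℕ → Ω → ℝ := fun n ω => ∏ i ∈ Finset.range (n + 1), Y i ω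
  have hX : ∀ n ω, 0 ≤ X n ω := fun n ω => Finset.prod_nonneg fun i _ => (hYmem i ω).1
  -- independence is given for the whole sequence `(Y n ω)ₙ`, so view `arr X m` as a function of it
  have hS : ∀ m,
      Measurable (arr (fun n (y : ℕ → ℝ) => ∏ i ∈ Finset.range (n + 1), y i) m) :=
    measurable_arr fun n => Finset.measurable_prod _ fun i _ => measurable_pi_apply i
  have hV : Measurable fun ω n => Y n ω := measurable_pi_lambda _ hYmeas
  have htail (m : ℕ) : μ {ω | (m : ℕ∞) ≤ countN X (T ω) ω} =
      ∫⁻ ω, μ {ω' | arr X m ω ≤ T ω'} ∂μ := by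
    simp_rw [natCast_le_countN_iff (hX · _) (hTnonneg _)]
    exact (hindep.symm.comp (hS m) measurable_id).measure_le_eq_lintegral
      ((hS m).comp hV) hTmeas
  intro n
  rw [show (n : ℕ∞) + 1 = (n + 1 : ℕ) by norm_cast,
    show (n : ℕ∞) + 2 = (n + 2 : ℕ) by norm_cast, htail, htail, htail]
  have hG := antitone_measure_le μ T
  refine lintegral_sq_le_mul_of_ae_sq_le (hG.measurable.comp ((hS n).comp hV)).aemeasurable
    (hG.measurable.comp ((hS (n + 2)).comp hV)).aemeasurable (ae_of_all _ fun ω => ?_)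
  exact sq_comp_arr_succ_le_mul hG (fun _ _ ha hd => hDFR.measure_le_sq_le hTmeas ha hd)
    (hX · ω) (antitone_prod_range (hYmem · ω)) n

/-- Let `Y 0, Y 1, …` be independent `[0,1]`-valued random
variables and define interarrival times `X n = Y 0 · Y 1 ⋯ Y n`
(mathematically `X_n = ∏_{i=1}^n Y_i`), with counting process `N`. If `T` is a
DFR nonnegative random time independent of the process and
`P(T = 0)·P(Y_1 = 0) = 0`, then `N(T)` is d-DFR. -/
theorem stmt8
    (μ : Measure Ω) [IsProbabilityMeasure μ]
    (Y : ℕ → Ω → ℝ) (T : Ω → ℝ)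
    (hYmeas : ∀ n, Measurable (Y n))
    (hYmem : ∀ n ω, Y n ω ∈ Set.Icc (0 : ℝ) 1)
    (hYindep : iIndepFun Y μ)
    (hTmeas : Measurable T) (hTnonneg : ∀ ω, 0 ≤ T ω)
    (hindep : IndepFun T (fun ω n => Y n ω) μ)
    (hDFR : IsDFR μ T)
    (hb : μ {ω | T ω = 0} * μ {ω | Y 0 ω = 0} = 0) :
    IsdDFR μ (fun ω =>
      countN (fun n ω' => ∏ i ∈ Finset.range (n + 1), Y i ω') (T ω) ω) :=
  stmt8_general μ Y T hYmeas hYmem hTmeas hTnonneg hindep hDFR
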